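/- Let h(n,k) be defined by the recurrence h(n,k) = h(n−1,k) + (n+k−4)·h(n−1,k−1) + (n−k−1)·h(n−1,k−2), with h(n,k)=0 for k<0 or k>n−2 and h(n,0)=1 for n ≥ 2. Then for all n ≥ 2 and 0 ≤ k ≤ n−2, h(n,k) equals the number of perfect matchings of [1,2n−4] with exactly k long pairs. -/

import Mathlib

/-- `M` is a perfect matching on `[1, 2n]`. -/
def IsMatching (n : ℕ) (M : Finset (Finset ℕ)) : Prop :=
  (∀ p ∈ M, p.card = 2) ∧ (M : Set (Finset ℕ)).PairwiseDisjoint id ∧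
    M.biUnion id = Finset.Icc 1 (2 * n)

/-- A pair is long if it is not of the form `{i, i+1}`. -/
def IsLong (p : Finset ℕ) : Prop := ∀ i : ℕ, p ≠ {i, i + 1}

/-- The number of perfect matchings of `[1,2n]` with exactly `k` long pairs. -/
noncomputable def matchCount (n : ℕ) (k : ℤ) : ℕ :=
  Nat.card {M : Finset (Finset ℕ) //
    IsMatching n M ∧ ({p : Finset ℕ | p ∈ M ∧ IsLong p}.ncard : ℤ) = k}

/-! Removing the pair `{j, 2m+2}` that contains the last point and closing the gap at `j` is a
bijection from matchings of `[1, 2m+2]` to pairs `(j, M)` with `j ∈ [1, 2m+1]` and `M` a matching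
of `[1, 2m]`. The removed pair is long unless `j = 2m+1`, and the only pair of `M` whose length
changes when the gap is reopened is a short pair `{j-1, j}`, which becomes long. Hence a matching
`M` with `l` long pairs yields one matching with `l` long pairs, `m + l` with `l + 1` (the
other `j ≤ 2m`) and `m - l` with `l + 2` (one for each short pair of `M`): this is the recurrence
with `n = m + 3`. -/

open Finset

section PairPartition

variable {α β : Type*} [DecidableEq α]

def IsPairPartition (s : Finset α) (M : Finset (Finset α)) : Prop :=
  (∀ p ∈ M, #p = 2) ∧ (M : Set (Finset α)).PairwiseDisjoint id ∧ M.biUnion id = s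

namespace IsPairPartition

variable {s : Finset α} {M : Finset (Finset α)} {p q : Finset α}

theorem subset (hM : IsPairPartition s M) (hp : p ∈ M) : p ⊆ s :=
  hM.2.2 ▸ subset_biUnion_of_mem id hp

theorem exists_mem (hM : IsPairPartition s M) {x : α} (hx : x ∈ s) : ∃ p ∈ M, x ∈ p := by
  simpa [← hM.2.2] using hx

theorem eq_of_mem_of_mem (hM : IsPairPartition s M) (hp : p ∈ M) (hq : q ∈ M) {x : α}
    (hxp : x ∈ p) (hxq : x ∈ q) : p = q :=
  hM.2.1.elim_finset hp hq x hxp hxq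

theorem card_eq (hM : IsPairPartition s M) : #s = 2 * #M := by
  rw [← hM.2.2, card_biUnion hM.2.1]
  exact (sum_const_nat hM.1).trans (mul_comm _ _)

theorem image [DecidableEq β] {f : α → β} (hM : IsPairPartition s M) (hf : Set.InjOn f s) :
    IsPairPartition (s.image f) (M.image (Finset.image f)) := by
  refine ⟨?_, ?_, ?_⟩
  · simp only [mem_image]
    rintro _ ⟨p, hp, rfl⟩
    rw [card_image_of_injOn (hf.mono (hM.subset hp)), hM.1 p hp]
  · rintro _ hp' _ hq' hne
    obtain ⟨p, hp, rfl⟩ := mem_image.1 hp'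
    obtain ⟨q, hq, rfl⟩ := mem_image.1 hq'
    rw [Function.onFun, id, id, disjoint_left]
    simp only [mem_image]
    rintro _ ⟨a, ha, rfl⟩ ⟨b, hb, hab⟩
    rw [hf (hM.subset hq hb) (hM.subset hp ha) hab] at hb
    exact hne (by rw [hM.eq_of_mem_of_mem hp hq ha hb])
  · rw [← hM.2.2, image_biUnion, biUnion_image]
    rfl

theorem insert (hM : IsPairPartition s M) (hp : #p = 2) (hps : Disjoint p s) :
    IsPairPartition (p ∪ s) (insert p M) := by
  refine ⟨?_, ?_, ?_⟩
  · simpa [hp] using hM.1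
  · rw [coe_insert]
    exact hM.2.1.insert fun q hq _ => hps.mono_right (hM.subset hq)
  · rw [biUnion_insert, hM.2.2, id]

theorem erase (hM : IsPairPartition s M) (hp : p ∈ M) : IsPairPartition (s \ p) (M.erase p) := by
  refine ⟨fun q hq => hM.1 q (mem_of_mem_erase hq), hM.2.1.subset (by simp), ?_⟩
  ext x
  simp only [mem_biUnion, mem_erase, mem_sdiff, id]
  constructor
  · rintro ⟨q, ⟨hqp, hq⟩, hxq⟩
    exact ⟨hM.subset hq hxq, fun hxp => hqp (hM.eq_of_mem_of_mem hq hp hxq hxp)⟩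
  · rintro ⟨hxs, hxp⟩
    obtain ⟨q, hq, hxq⟩ := hM.exists_mem hxs
    exact ⟨q, ⟨fun h => hxp (h ▸ hxq), hq⟩, hxq⟩

end IsPairPartition

theorem isPairPartition_empty_iff {M : Finset (Finset α)} : IsPairPartition ∅ M ↔ M = ∅ := by
  refine ⟨fun hM => ?_, fun hM => ⟨by simp [hM], by simp [hM], by simp [hM]⟩⟩
  have := hM.card_eq
  rw [card_empty] at this
  exact card_eq_zero.1 (by omega)

open Classical in
noncomputable def pairPartitions (s : Finset α) : Finset (Finset (Finset α)) :=
  {M ∈ s.powerset.powerset | IsPairPartition s M}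

theorem mem_pairPartitions {s : Finset α} {M : Finset (Finset α)} :
    M ∈ pairPartitions s ↔ IsPairPartition s M := by
  classical
  rw [pairPartitions, mem_filter, and_iff_right_iff_imp]
  exact fun h => mem_powerset.2 fun p hp => mem_powerset.2 (h.subset hp)

end PairPartition

section LongPairs

instance : DecidablePred IsLong := fun p =>
  decidable_of_iff (∀ i ∈ p, p ≠ {i, i + 1})
    ⟨fun h i he => h i (he ▸ mem_insert_self i {i + 1}) he, fun h i _ => h i⟩

theorem not_isLong_iff {p : Finset ℕ} : ¬IsLong p ↔ ∃ i, p = {i, i + 1} := by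
  simp [IsLong]

theorem isLong_pair_iff {a b : ℕ} (hab : a < b) : IsLong {a, b} ↔ a + 1 ≠ b := by
  rw [← not_iff_not, not_isLong_iff, not_not]
  constructor
  · rintro ⟨i, hi⟩
    have ha : a ∈ ({i, i + 1} : Finset ℕ) := hi ▸ mem_insert_self a {b}
    have hb : b ∈ ({i, i + 1} : Finset ℕ) := hi ▸ mem_insert_of_mem (mem_singleton_self b)
    simp only [mem_insert, mem_singleton] at ha hb
    omega
  · rintro rfl
    exact ⟨a, rfl⟩

def longCount (M : Finset (Finset ℕ)) : ℕ := #{p ∈ M | IsLong p}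

theorem longCount_insert {M : Finset (Finset ℕ)} {p : Finset ℕ} (hp : p ∉ M) :
    longCount (insert p M) = longCount M + if IsLong p then 1 else 0 := by
  unfold longCount
  rw [filter_insert]
  split_ifs
  · exact card_insert_of_notMem fun h => hp (mem_filter.1 h).1
  · rfl

theorem card_filter_pair_mem_add_longCount {m : ℕ} {M : Finset (Finset ℕ)}
    (hM : IsPairPartition (Icc 1 (2 * m)) M) :
    #{j ∈ Icc 1 (2 * m) | {j - 1, j} ∈ M} + longCount M = m := by
  have hshort : #{j ∈ Icc 1 (2 * m) | {j - 1, j} ∈ M} = #{p ∈ M | ¬IsLong p} := by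
    refine card_nbij (fun j => {j - 1, j}) ?_ ?_ ?_
    · intro j hj
      simp only [coe_filter, mem_Icc, Set.mem_ofPred_eq] at hj ⊢
      refine ⟨hj.2, not_isLong_iff.2 ⟨j - 1, by rw [Nat.sub_add_cancel hj.1.1]⟩⟩
    · intro j hj j' hj' hjj'
      replace hjj' : ({j - 1, j} : Finset ℕ) = {j' - 1, j'} := hjj'
      simp only [coe_filter, mem_Icc, Set.mem_ofPred_eq] at hj hj'
      have h1 : j ∈ ({j' - 1, j'} : Finset ℕ) :=
        hjj' ▸ mem_insert_of_mem (mem_singleton_self j)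
      have h2 : j' ∈ ({j - 1, j} : Finset ℕ) :=
        hjj' ▸ mem_insert_of_mem (mem_singleton_self j')
      simp only [mem_insert, mem_singleton] at h1 h2
      omega
    · intro p hp
      simp only [coe_filter, Set.mem_ofPred_eq] at hp
      obtain ⟨i, rfl⟩ := not_isLong_iff.1 hp.2
      have hi := hM.subset hp.1 (mem_insert_of_mem (mem_singleton_self (i + 1)))
      refine ⟨i + 1, ?_, by simp⟩
      simp only [coe_filter, Set.mem_ofPred_eq, add_tsub_cancel_right]
      exact ⟨hi, hp.1⟩
  have hcard := hM.card_eq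
  rw [Nat.card_Icc, add_tsub_cancel_right] at hcard
  rw [hshort, longCount, add_comm, card_filter_add_card_filter_not]
  omega

end LongPairs

section Shift

def shiftFrom (j x : ℕ) : ℕ := if j ≤ x then x + 1 else x

def unshiftFrom (j x : ℕ) : ℕ := if j < x then x - 1 else x

theorem shiftFrom_strictMono (j : ℕ) : StrictMono (shiftFrom j) := by
  intro x y h
  unfold shiftFrom
  split_ifs <;> omega

theorem unshiftFrom_shiftFrom (j x : ℕ) : unshiftFrom j (shiftFrom j x) = x := by
  unfold shiftFrom unshiftFrom
  split_ifs <;> omega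

theorem shiftFrom_unshiftFrom {j x : ℕ} (hx : x ≠ j) : shiftFrom j (unshiftFrom j x) = x := by
  unfold shiftFrom unshiftFrom
  split_ifs <;> omega

theorem image_shiftFrom_Icc {m j : ℕ} (hj : j ∈ Icc 1 (2 * m + 1)) :
    (Icc 1 (2 * m)).image (shiftFrom j) = (Icc 1 (2 * m + 1)).erase j := by
  rw [mem_Icc] at hj
  ext x
  simp only [mem_image, mem_Icc, mem_erase]
  constructor
  · rintro ⟨y, hy, rfl⟩
    unfold shiftFrom
    split_ifs <;> omega
  · rintro ⟨hxj, hx⟩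
    refine ⟨unshiftFrom j x, ?_, shiftFrom_unshiftFrom hxj⟩
    unfold unshiftFrom
    split_ifs <;> omega

theorem image_unshiftFrom_Icc {m j : ℕ} (hj : j ∈ Icc 1 (2 * m + 1)) :
    (Icc 1 (2 * (m + 1)) \ {j, 2 * m + 2}).image (unshiftFrom j) = Icc 1 (2 * m) := by
  have hdiff : Icc 1 (2 * (m + 1)) \ {j, 2 * m + 2} = (Icc 1 (2 * m + 1)).erase j := by
    ext x
    simp only [mem_sdiff, mem_Icc, mem_insert, mem_singleton, mem_erase]
    omega
  rw [hdiff, ← image_shiftFrom_Icc hj, image_image]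
  simp [Function.comp_def, unshiftFrom_shiftFrom]

theorem isLong_image_shiftFrom_iff {j : ℕ} (hj : 1 ≤ j) {p : Finset ℕ} (hp : #p = 2) :
    IsLong (p.image (shiftFrom j)) ↔ IsLong p ∨ p = {j - 1, j} := by
  obtain ⟨a, b, hab, rfl⟩ := card_eq_two.1 hp
  clear hp
  wlog hlt : a < b generalizing a b
  · rw [pair_comm]
    exact this b a hab.symm (lt_of_le_of_ne (not_lt.1 hlt) hab.symm)
  have hpair : ({a, b} : Finset ℕ) = {j - 1, j} ↔ a = j - 1 ∧ b = j := by
    constructor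
    · intro h
      have ha : a ∈ ({j - 1, j} : Finset ℕ) := h ▸ mem_insert_self a {b}
      have hb : b ∈ ({j - 1, j} : Finset ℕ) := h ▸ mem_insert_of_mem (mem_singleton_self b)
      simp only [mem_insert, mem_singleton] at ha hb
      omega
    · rintro ⟨rfl, rfl⟩
      rfl
  rw [image_insert, image_singleton, isLong_pair_iff (shiftFrom_strictMono j hlt),
    isLong_pair_iff hlt, hpair]
  unfold shiftFrom
  split_ifs <;> omega

end Shift

section InsertPair

variable {m j : ℕ} {M : Finset (Finset ℕ)}

def insertPair (m j : ℕ) (M : Finset (Finset ℕ)) : Finset (Finset ℕ) :=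
  insert {j, 2 * m + 2} (M.image (image (shiftFrom j)))

theorem pair_top_notMem_image (hM : IsPairPartition (Icc 1 (2 * m)) M) :
    {j, 2 * m + 2} ∉ M.image (image (shiftFrom j)) := by
  intro h
  obtain ⟨p, hp, hpj⟩ := mem_image.1 h
  have htop : 2 * m + 2 ∈ p.image (shiftFrom j) := hpj ▸ by simp
  obtain ⟨x, hx, hxtop⟩ := mem_image.1 htop
  have := mem_Icc.1 (hM.subset hp hx)
  unfold shiftFrom at hxtop
  split_ifs at hxtop <;> omega

theorem isPairPartition_insertPair (hM : IsPairPartition (Icc 1 (2 * m)) M)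
    (hj : j ∈ Icc 1 (2 * m + 1)) :
    IsPairPartition (Icc 1 (2 * (m + 1))) (insertPair m j M) := by
  have hdisj : Disjoint {j, 2 * m + 2} ((Icc 1 (2 * m + 1)).erase j) := by
    simp [disjoint_left]
  have h := (hM.image (shiftFrom_strictMono j).injective.injOn).insert
    (card_pair (by rw [mem_Icc] at hj; omega)) (image_shiftFrom_Icc hj ▸ hdisj)
  rw [insertPair]
  convert h using 1
  rw [image_shiftFrom_Icc hj]
  ext x
  simp only [mem_Icc, mem_union, mem_insert, mem_singleton, mem_erase]
  rw [mem_Icc] at hj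
  omega

theorem insertPair_injOn :
    Set.InjOn (fun x : ℕ × Finset (Finset ℕ) => insertPair m x.1 x.2)
      ↑(Icc 1 (2 * m + 1) ×ˢ pairPartitions (Icc 1 (2 * m))) := by
  rintro ⟨j, M⟩ hx ⟨j', M'⟩ hx' heq
  simp only [coe_product, Set.mem_prod, mem_coe, mem_pairPartitions] at hx hx'
  replace heq : insertPair m j M = insertPair m j' M' := heq
  have hjj' : j = j' := by
    have hmem : {j, 2 * m + 2} ∈ insertPair m j' M' := heq ▸ mem_insert_self _ _
    have hpair := (isPairPartition_insertPair hx'.2 hx'.1).eq_of_mem_of_mem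
      hmem (mem_insert_self _ _)
      (mem_insert_of_mem (mem_singleton_self (2 * m + 2)))
      (mem_insert_of_mem (mem_singleton_self (2 * m + 2)))
    have hj : j ∈ ({j', 2 * m + 2} : Finset ℕ) := hpair ▸ mem_insert_self _ _
    simp only [mem_insert, mem_singleton] at hj
    rw [mem_Icc] at hx
    omega
  subst hjj'
  have himage := congrArg (erase · {j, 2 * m + 2}) heq
  simp only [insertPair, erase_insert (pair_top_notMem_image hx.2),
    erase_insert (pair_top_notMem_image hx'.2)] at himage
  rw [image_injective (image_injective (shiftFrom_strictMono j).injective) himage]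

theorem exists_insertPair {M' : Finset (Finset ℕ)}
    (hM' : IsPairPartition (Icc 1 (2 * (m + 1))) M') :
    ∃ j ∈ Icc 1 (2 * m + 1), ∃ M ∈ pairPartitions (Icc 1 (2 * m)),
      insertPair m j M = M' := by
  obtain ⟨p, hp, htop⟩ := hM'.exists_mem (x := 2 * m + 2) (by simp; omega)
  obtain ⟨j, hj⟩ : ∃ j, p.erase (2 * m + 2) = {j} :=
    card_eq_one.1 (by rw [card_erase_of_mem htop, hM'.1 p hp])
  have hjp : j ∈ p.erase (2 * m + 2) := hj ▸ mem_singleton_self j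
  have hj_mem : j ∈ Icc 1 (2 * m + 1) := by
    have := mem_Icc.1 (hM'.subset hp (mem_of_mem_erase hjp))
    have := ne_of_mem_erase hjp
    rw [mem_Icc]
    omega
  have hpj : p = {j, 2 * m + 2} := by rw [pair_comm, ← hj, insert_erase htop]
  subst hpj
  have hrest := hM'.erase hp
  have hleft : Set.LeftInvOn (shiftFrom j) (unshiftFrom j)
      ↑(Icc 1 (2 * (m + 1)) \ {j, 2 * m + 2}) := fun x hx =>
    shiftFrom_unshiftFrom fun hxj => (mem_sdiff.1 hx).2 (by rw [hxj]; exact mem_insert_self j _)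
  refine ⟨j, hj_mem, (M'.erase {j, 2 * m + 2}).image (image (unshiftFrom j)), ?_, ?_⟩
  · rw [mem_pairPartitions, ← image_unshiftFrom_Icc hj_mem]
    exact hrest.image hleft.injOn
  · rw [insertPair, image_image]
    have hid : ∀ q ∈ M'.erase {j, 2 * m + 2},
        (image (shiftFrom j) ∘ image (unshiftFrom j)) q = q := fun q hq => by
      rw [Function.comp_apply, image_image]
      exact (image_congr fun x hx => hleft (hrest.subset hq hx)).trans image_id'
    rw [image_congr hid, image_id', insert_erase hp]

theorem pairPartitions_succ :
    pairPartitions (Icc 1 (2 * (m + 1))) =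
      (Icc 1 (2 * m + 1) ×ˢ pairPartitions (Icc 1 (2 * m))).image
        fun x => insertPair m x.1 x.2 := by
  ext M'
  simp only [mem_image, mem_product, Prod.exists, mem_pairPartitions]
  constructor
  · intro hM'
    obtain ⟨j, hj, M, hM, rfl⟩ := exists_insertPair hM'
    exact ⟨j, M, ⟨hj, mem_pairPartitions.1 hM⟩, rfl⟩
  · rintro ⟨j, M, ⟨hj, hM⟩, rfl⟩
    exact isPairPartition_insertPair hM hj

end InsertPair

section Counting

variable {m : ℕ} {M : Finset (Finset ℕ)}

theorem longCount_image_shiftFrom {s : Finset ℕ} (hM : IsPairPartition s M) {j : ℕ}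
    (hj : 1 ≤ j) :
    longCount (M.image (image (shiftFrom j))) =
      longCount M + if {j - 1, j} ∈ M then 1 else 0 := by
  have hshort : ¬IsLong {j - 1, j} := not_isLong_iff.2 ⟨j - 1, by rw [Nat.sub_add_cancel hj]⟩
  rw [longCount, filter_image,
    card_image_of_injective _ (image_injective (shiftFrom_strictMono j).injective),
    filter_congr fun p hp => isLong_image_shiftFrom_iff hj (hM.1 p hp), filter_or,
    card_union_of_disjoint (disjoint_filter.2 fun p _ hp hpj => hshort (by rwa [← hpj])),
    filter_eq']
  split_ifs <;> rfl

theorem longCount_insertPair (hM : IsPairPartition (Icc 1 (2 * m)) M) {j : ℕ}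
    (hj : j ∈ Icc 1 (2 * m + 1)) :
    longCount (insertPair m j M) =
      longCount M + (if j = 2 * m + 1 then 0 else 1) + if {j - 1, j} ∈ M then 1 else 0 := by
  rw [mem_Icc] at hj
  have htop : IsLong {j, 2 * m + 2} ↔ j ≠ 2 * m + 1 := by
    rw [isLong_pair_iff (by omega)]
    omega
  rw [insertPair, longCount_insert (pair_top_notMem_image hM), longCount_image_shiftFrom hM hj.1]
  simp only [htop]
  split_ifs <;> omega

theorem card_filter_longCount_insertPair (hM : IsPairPartition (Icc 1 (2 * m)) M) (k : ℤ) :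
    (#{j ∈ Icc 1 (2 * m + 1) | (longCount (insertPair m j M) : ℤ) = k} : ℤ) =
      (if (longCount M : ℤ) = k then 1 else 0) +
        (if (longCount M : ℤ) = k - 1 then (m + k - 1 : ℤ) else 0) +
        (if (longCount M : ℤ) = k - 2 then (m - k + 2 : ℤ) else 0) := by
  set l := longCount M
  have hshort := card_filter_pair_mem_add_longCount hM
  have hsplit := card_filter_add_card_filter_not (s := Icc 1 (2 * m)) (fun j => {j - 1, j} ∈ M)
  rw [Nat.card_Icc, add_tsub_cancel_right] at hsplit
  have htop : {2 * m + 1 - 1, 2 * m + 1} ∉ M := fun h => by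
    have := mem_Icc.1 (hM.subset h (mem_insert_of_mem (mem_singleton_self _)))
    omega
  have hterm : ∀ j ∈ Icc 1 (2 * m + 1),
      (if (longCount (insertPair m j M) : ℤ) = k then (1 : ℤ) else 0) =
        if (l : ℤ) + (if j = 2 * m + 1 then 0 else 1) + (if {j - 1, j} ∈ M then 1 else 0) = k
        then 1 else 0 := fun j hj => by
    rw [longCount_insertPair hM hj]
    push_cast
    rfl
  rw [← sum_boole, sum_congr rfl hterm, ← insert_Icc_right_eq_Icc_add_one (by omega),
    sum_insert (by simp), ← sum_filter_add_sum_filter_not _ fun j => {j - 1, j} ∈ M]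
  have hlt : ∀ j ∈ Icc 1 (2 * m), j ≠ 2 * m + 1 := fun j hj => by
    have := mem_Icc.1 hj
    omega
  rw [if_pos rfl, if_neg htop,
    sum_eq_card_nsmul (s := {j ∈ Icc 1 (2 * m) | {j - 1, j} ∈ M})
      fun j hj => by rw [if_neg (hlt j (mem_filter.1 hj).1), if_pos (mem_filter.1 hj).2],
    sum_eq_card_nsmul (s := {j ∈ Icc 1 (2 * m) | {j - 1, j} ∉ M})
      fun j hj => by rw [if_neg (hlt j (mem_filter.1 hj).1), if_neg (mem_filter.1 hj).2],
    nsmul_eq_mul, nsmul_eq_mul]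
  split_ifs <;> omega

theorem card_filter_pairPartitions_succ (P : Finset (Finset ℕ) → Prop) [DecidablePred P] :
    #{M' ∈ pairPartitions (Icc 1 (2 * (m + 1))) | P M'} =
      ∑ M ∈ pairPartitions (Icc 1 (2 * m)),
        #{j ∈ Icc 1 (2 * m + 1) | P (insertPair m j M)} := by
  rw [pairPartitions_succ, filter_image,
    card_image_of_injOn (insertPair_injOn.mono (coe_subset.2 (filter_subset _ _))),
    card_filter, sum_product_right]
  simp only [card_filter]

end Counting

section MatchCount

theorem matchCount_eq_card (m : ℕ) (k : ℤ) :
    matchCount m k = #{M ∈ pairPartitions (Icc 1 (2 * m)) | (longCount M : ℤ) = k} := by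
  have hlong (M : Finset (Finset ℕ)) : {p | p ∈ M ∧ IsLong p}.ncard = longCount M := by
    rw [longCount, ← Set.ncard_coe_finset, coe_filter]
  rw [matchCount, ← Set.ncard_coe_finset, ← Nat.card_coe_set_eq]
  simp only [coe_filter, mem_pairPartitions, hlong]
  rfl

theorem matchCount_eq_zero {m : ℕ} {k : ℤ} (hk : k < 0 ∨ (m : ℤ) < k) :
    matchCount m k = 0 := by
  rw [matchCount_eq_card, card_eq_zero, filter_eq_empty_iff]
  intro M hM hMk
  have := card_filter_pair_mem_add_longCount (mem_pairPartitions.1 hM)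
  omega

theorem matchCount_succ (m : ℕ) (k : ℤ) :
    (matchCount (m + 1) k : ℤ) = matchCount m k + (m + k - 1) * matchCount m (k - 1) +
      (m - k + 2) * matchCount m (k - 2) := by
  simp only [matchCount_eq_card, card_filter_pairPartitions_succ, Nat.cast_sum]
  rw [sum_congr rfl fun M hM => card_filter_longCount_insertPair (mem_pairPartitions.1 hM) k,
    sum_add_distrib, sum_add_distrib, ← sum_filter, ← sum_filter, ← sum_filter]
  simp only [sum_const, nsmul_eq_mul, mul_one]
  ring

theorem matchCount_zero_right (m : ℕ) : matchCount m 0 = 1 := by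
  induction m with
  | zero =>
    rw [matchCount_eq_card, card_eq_one]
    refine ⟨∅, ext fun M => ?_⟩
    simp only [mul_zero, Icc_eq_empty_of_lt zero_lt_one, mem_filter, mem_pairPartitions,
      isPairPartition_empty_iff, mem_singleton, and_iff_left_iff_imp]
    rintro rfl
    rfl
  | succ m ih =>
    have h := matchCount_succ m 0
    rw [matchCount_eq_zero (m := m) (k := 0 - 1) (by omega),
      matchCount_eq_zero (m := m) (k := 0 - 2) (by omega), ih] at h
    omega

end MatchCount

theorem stmt15 (h : ℕ → ℤ → ℤ)
    (hout : ∀ (n : ℕ) (k : ℤ), k < 0 ∨ (n : ℤ) - 2 < k → h n k = 0)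
    (hbase : ∀ n : ℕ, 2 ≤ n → h n 0 = 1)
    (hrec : ∀ n : ℕ, 3 ≤ n → ∀ k : ℤ, 0 < k → k ≤ (n : ℤ) - 2 →
      h n k = h (n - 1) k + ((n : ℤ) + k - 4) * h (n - 1) (k - 1)
        + ((n : ℤ) - k - 1) * h (n - 1) (k - 2)) :
    ∀ n : ℕ, 2 ≤ n → ∀ k : ℤ, 0 ≤ k → k ≤ (n : ℤ) - 2 →
      h n k = (matchCount (n - 2) k : ℤ) := by
  intro n hn
  obtain ⟨m, rfl⟩ := Nat.exists_eq_add_of_le' hn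
  suffices key : ∀ k, h (m + 2) k = matchCount m k from fun k _ _ => key k
  have hboundary (m : ℕ) (k : ℤ) (hk : k ≤ 0 ∨ (m : ℤ) < k) :
      h (m + 2) k = matchCount m k := by
    rcases eq_or_ne k 0 with rfl | hk0
    · rw [hbase _ (by omega), matchCount_zero_right, Nat.cast_one]
    · rw [hout _ k (by push_cast; omega), matchCount_eq_zero (by omega), Nat.cast_zero]
  clear hn
  induction m with
  | zero => exact fun k => hboundary 0 k (by omega)
  | succ m ih =>
    intro k
    by_cases hk : k ≤ 0 ∨ ((m + 1 : ℕ) : ℤ) < k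
    · exact hboundary _ k hk
    rw [hrec (m + 1 + 2) (by omega) k (by omega) (by push_cast; omega),
      show m + 1 + 2 - 1 = m + 2 from rfl, ih, ih, ih, matchCount_succ]
    push_cast
    ring
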